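/- Define Q^u_d(y) = Σ_{k=0}^{d} C(d,k) · ∏_{i=0}^{k-1}(i+1-r)(i+r) · ∏_{i=k+1}^{d}(y+d+r-i)(y+u+r+i) and φ_d(y) = ∏_{i=1}^{d}(y+i)(y+i-1+2r). Then for all natural numbers u and d, Q^u_d(y) · φ_u(y) = Q^d_u(y) · φ_d(y), as polynomials in y and r. -/

import Mathlib

/-!
In terms of rising factorials `x⁽ⁿ⁾ = x (x+1) ⋯ (x+n-1)`,
`Q^u_d(y) = Σ_{k+j=d} C(d,k) (1-r)⁽ᵏ⁾ r⁽ᵏ⁾ (y+r)⁽ʲ⁾ (y+u+r+k+1)⁽ʲ⁾` and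
`φ_d(y) = (y+1)⁽ᵈ⁾ (y+2r)⁽ᵈ⁾`. Termwise identities between rising factorials, together
with Pascal's rule, give two recursions:
`Q^{u+1}_{d+1}(y) = Q^u_{d+1}(y) + (d+1)(y+r) Q^u_d(y+1)` and
`Q^d_{u+1}(y) = (y+u+1)(y+u+2r) Q^{d+1}_u(y) - (u-d)(y+r) Q^d_u(y+1)`.
They show `Q^0_n = φ_n`, and they reduce the identity for `(u+1, d+1)` to the identities for
`(u, d+1)` at `y` and `(u, d)` at `y+1`, so it follows by induction on `u`.
-/

open Finset

/-- The two-variable polynomial ring `ℚ[y, r]`: variable `0` is `y` and variable `1` is `r`. -/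
noncomputable abbrev R2 : Type := MvPolynomial (Fin 2) ℚ

noncomputable def r : R2 := MvPolynomial.X 1

/-- `Q u d y = Σ_{k=0}^{d} C(d,k) ∏_{i=0}^{k-1}(i+1-r)(i+r) ∏_{i=k+1}^{d}(y+d+r-i)(y+u+r+i)`,
as a function of the element `y` (so that substitutions like `y ↦ y+1` are meaningful). -/
noncomputable def Q (u d : ℕ) (y : R2) : R2 :=
  ∑ k ∈ Finset.range (d + 1),
    (d.choose k : R2) * (∏ i ∈ Finset.range k, (((i : R2) + 1 - r) * ((i : R2) + r))) *
      ∏ i ∈ Finset.Icc (k + 1) d,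
        ((y + (d : R2) + r - (i : R2)) * (y + (u : R2) + r + (i : R2)))

/-- `φ d y = ∏_{i=1}^{d} (y+i)(y+i-1+2r)`. -/
noncomputable def phi (d : ℕ) (y : R2) : R2 :=
  ∏ i ∈ Finset.Icc 1 d, ((y + (i : R2)) * (y + (i : R2) - 1 + 2 * r))

open Polynomial

section Pochhammer

variable {S : Type*}

lemma ascPochhammer_eval_eq_prod_range [CommSemiring S] (n : ℕ) (x : S) :
    (ascPochhammer S n).eval x = ∏ i ∈ range n, (x + i) := by
  induction n with
  | zero => simp
  | succ n ih => rw [ascPochhammer_succ_eval, ih, prod_range_succ]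

lemma ascPochhammer_succ_eval_left [CommSemiring S] (n : ℕ) (x : S) :
    (ascPochhammer S (n + 1)).eval x = x * (ascPochhammer S n).eval (x + 1) := by
  simp [ascPochhammer_succ_left, eval_comp]

lemma ascPochhammer_eval_add_one_sub [CommRing S] (n : ℕ) (x : S) :
    (ascPochhammer S (n + 1)).eval (x + 1) - (ascPochhammer S (n + 1)).eval x =
      (n + 1) * (ascPochhammer S n).eval (x + 1) := by
  rw [sub_eq_iff_eq_add']
  simpa [eval_comp] using congrArg (eval x) (ascPochhammer_succ_comp_X_add_one S n)

lemma prod_Icc_add_eq_ascPochhammer_eval [CommSemiring S] (x : S) (k n : ℕ) :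
    ∏ i ∈ Icc (k + 1) (k + n), (x + i) = (ascPochhammer S n).eval (x + k + 1) := by
  induction n generalizing k with
  | zero => simp
  | succ n ih =>
    rw [← mul_prod_Ioc_eq_prod_Icc (by omega), ← Icc_add_one_left_eq_Ioc,
      show k + (n + 1) = k + 1 + n by omega, ih, ascPochhammer_succ_eval_left, Nat.cast_succ,
      ← add_assoc]

lemma prod_Icc_sub_eq_ascPochhammer_eval [CommRing S] (x : S) (k n : ℕ) :
    ∏ i ∈ Icc (k + 1) (k + n), (x + (k + n : ℕ) - i) = (ascPochhammer S n).eval x := by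
  induction n generalizing k with
  | zero => simp
  | succ n ih =>
    rw [← mul_prod_Ioc_eq_prod_Icc (by omega), ← Icc_add_one_left_eq_Ioc,
      show k + (n + 1) = k + 1 + n by omega, ih, ascPochhammer_succ_eval]
    push_cast
    ring

end Pochhammer

noncomputable def qTerm (u : ℕ) (y : R2) (k j : ℕ) : R2 :=
  (ascPochhammer R2 k).eval (1 - r) * (ascPochhammer R2 k).eval r *
    ((ascPochhammer R2 j).eval (y + r) * (ascPochhammer R2 j).eval (y + u + r + k + 1))

lemma Q_eq_sum_antidiagonal (u d : ℕ) (y : R2) :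
    Q u d y = ∑ p ∈ antidiagonal d, (d.choose p.1 : R2) * qTerm u y p.1 p.2 := by
  rw [Nat.sum_antidiagonal_eq_sum_range_succ_mk, Q]
  refine sum_congr rfl fun k hk => ?_
  obtain ⟨j, rfl⟩ := Nat.exists_eq_add_of_le (Nat.lt_succ_iff.mp (mem_range.mp hk))
  have head : ∏ i ∈ range k, ((i : R2) + 1 - r) * ((i : R2) + r) =
      (ascPochhammer R2 k).eval (1 - r) * (ascPochhammer R2 k).eval r := by
    rw [ascPochhammer_eval_eq_prod_range, ascPochhammer_eval_eq_prod_range, ← prod_mul_distrib]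
    exact prod_congr rfl fun i _ => by ring
  have tail : ∏ i ∈ Icc (k + 1) (k + j),
      ((y + ((k + j : ℕ) : R2) + r - i) * (y + u + r + i)) =
      (ascPochhammer R2 j).eval (y + r) * (ascPochhammer R2 j).eval (y + u + r + k + 1) := by
    rw [prod_mul_distrib, ← prod_Icc_sub_eq_ascPochhammer_eval _ k,
      ← prod_Icc_add_eq_ascPochhammer_eval]
    exact congrArg (· * _) (prod_congr rfl fun i _ => by ring)
  rw [qTerm, head, tail, Nat.add_sub_cancel_left, mul_assoc]

lemma qTerm_succ_left_sub (u : ℕ) (y : R2) (k j : ℕ) :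
    qTerm (u + 1) y k (j + 1) - qTerm u y k (j + 1) =
      (j + 1) * (y + r) * qTerm u (y + 1) k j := by
  have hw := ascPochhammer_eval_add_one_sub j (y + u + r + k + 1)
  have hz := ascPochhammer_succ_eval_left j (y + r)
  simp only [qTerm]
  rw [show y + ((u + 1 : ℕ) : R2) + r + k + 1 = y + u + r + k + 1 + 1 by push_cast; ring,
    show y + 1 + r = y + r + 1 by ring, show y + 1 + u + r + k + 1 = y + u + r + k + 1 + 1 by ring]
  linear_combination ((ascPochhammer R2 k).eval (1 - r) * (ascPochhammer R2 k).eval r *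
      (ascPochhammer R2 (j + 1)).eval (y + r)) * hw +
    ((j + 1) * (ascPochhammer R2 k).eval (1 - r) * (ascPochhammer R2 k).eval r *
      (ascPochhammer R2 j).eval (y + u + r + k + 1 + 1)) * hz

lemma qTerm_pascal (d : ℕ) (y : R2) (k j : ℕ) :
    qTerm d y k (j + 1) + qTerm d y (k + 1) j =
      (y + (k + j : ℕ) + 1) * (y + (k + j : ℕ) + 2 * r) * qTerm (d + 1) y k j -
        (((k + j : ℕ) : R2) - d) * (y + r) * qTerm d (y + 1) k j := by
  have hz :=
    (ascPochhammer_succ_eval_left j (y + r)).symm.trans (ascPochhammer_succ_eval j (y + r))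
  simp only [qTerm]
  rw [show y + ((d + 1 : ℕ) : R2) + r + k + 1 = y + d + r + k + 1 + 1 by push_cast; ring,
    show y + d + r + ((k + 1 : ℕ) : R2) + 1 = y + d + r + k + 1 + 1 by push_cast; ring,
    show y + 1 + r = y + r + 1 by ring, show y + 1 + d + r + k + 1 = y + d + r + k + 1 + 1 by ring,
    ascPochhammer_succ_eval_left j (y + d + r + k + 1), ascPochhammer_succ_eval j (y + r),
    ascPochhammer_succ_eval k, ascPochhammer_succ_eval k]
  push_cast
  linear_combination ((k : R2) + j - d) * (ascPochhammer R2 k).eval (1 - r) *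
    (ascPochhammer R2 k).eval r * (ascPochhammer R2 j).eval (y + d + r + k + 1 + 1) * hz

lemma qTerm_zero_right (u : ℕ) (y : R2) (k : ℕ) :
    qTerm u y k 0 = (ascPochhammer R2 k).eval (1 - r) * (ascPochhammer R2 k).eval r := by
  simp [qTerm]

lemma Q_zero_right (u : ℕ) (y : R2) : Q u 0 y = 1 := by
  simp [Q]

lemma Q_succ_succ (u d : ℕ) (y : R2) :
    Q (u + 1) (d + 1) y = Q u (d + 1) y + (d + 1) * (y + r) * Q u d (y + 1) := by
  simp only [Q_eq_sum_antidiagonal, Nat.sum_antidiagonal_succ', qTerm_zero_right]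
  rw [mul_sum, add_assoc, ← sum_add_distrib]
  refine congrArg _ (sum_congr rfl fun ⟨k, j⟩ hkj => ?_)
  have hchoose : ((d + 1).choose k : R2) * (j + 1) = d.choose k * (d + 1) := by
    have := Nat.choose_mul_succ_eq d k
    rw [← mem_antidiagonal.mp hkj, show k + j + 1 - k = j + 1 by omega] at this
    rw [← mem_antidiagonal.mp hkj]
    exact_mod_cast this.symm
  linear_combination ((d + 1).choose k : R2) * qTerm_succ_left_sub u y k j +
    (y + r) * qTerm u (y + 1) k j * hchoose

lemma Q_succ_right (d u : ℕ) (y : R2) :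
    Q d (u + 1) y =
      (y + u + 1) * (y + u + 2 * r) * Q (d + 1) u y - (u - d) * (y + r) * Q d u (y + 1) := by
  rw [Q_eq_sum_antidiagonal, sum_antidiagonal_choose_succ_mul (qTerm d y), ← sum_add_distrib,
    Q_eq_sum_antidiagonal, Q_eq_sum_antidiagonal, mul_sum, mul_sum, ← sum_sub_distrib]
  refine sum_congr rfl fun ⟨k, j⟩ hkj => ?_
  obtain rfl : k + j = u := mem_antidiagonal.mp hkj
  rw [← Nat.choose_symm_add]
  linear_combination ((k + j).choose k : R2) * qTerm_pascal d y k j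

lemma phi_eq_ascPochhammer_eval (d : ℕ) (y : R2) :
    phi d y = (ascPochhammer R2 d).eval (y + 1) * (ascPochhammer R2 d).eval (y + 2 * r) := by
  induction d with
  | zero => simp [phi]
  | succ d ih =>
    rw [phi, prod_Icc_succ_top (by omega), ← phi, ih, ascPochhammer_succ_eval,
      ascPochhammer_succ_eval]
    push_cast
    ring

lemma phi_zero (y : R2) : phi 0 y = 1 := by
  simp [phi]

lemma phi_succ (n : ℕ) (y : R2) : phi (n + 1) y = phi n y * ((y + n + 1) * (y + n + 2 * r)) := by
  rw [phi_eq_ascPochhammer_eval, phi_eq_ascPochhammer_eval, ascPochhammer_succ_eval,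
    ascPochhammer_succ_eval]
  ring

lemma phi_succ' (n : ℕ) (y : R2) : phi (n + 1) y = (y + 1) * (y + 2 * r) * phi n (y + 1) := by
  rw [phi_eq_ascPochhammer_eval, phi_eq_ascPochhammer_eval, ascPochhammer_succ_eval_left,
    ascPochhammer_succ_eval_left, show y + 2 * r + 1 = y + 1 + 2 * r by ring]
  ring

lemma Q_zero_left (n : ℕ) (y : R2) : Q 0 n y = phi n y := by
  induction n using Nat.twoStepInduction generalizing y with
  | zero => rw [Q_zero_right, phi_zero]
  | one =>
    rw [Q_succ_right, Q_zero_right, Q_zero_right, phi_succ, phi_zero]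
    push_cast
    ring
  | more m ih ih' =>
    rw [Q_succ_right, Q_succ_succ 0 m y, ih (y + 1), ih' y, ih' (y + 1), phi_succ (m + 1),
      phi_succ m (y + 1)]
    push_cast
    ring

lemma Q_mul_phi_comm (u d : ℕ) (y : R2) : Q u d y * phi u y = Q d u y * phi d y := by
  induction u generalizing d y with
  | zero => rw [Q_zero_right, phi_zero, Q_zero_left, mul_one, one_mul]
  | succ n ih =>
    cases d with
    | zero => rw [Q_zero_right, phi_zero, Q_zero_left, mul_one, one_mul]
    | succ m =>
      linear_combination phi (n + 1) y * Q_succ_succ n m y - phi (m + 1) y * Q_succ_succ m n y -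
        phi (m + 1) y * Q_succ_right m n y + Q n (m + 1) y * phi_succ n y +
        (y + n + 1) * (y + n + 2 * r) * ih (m + 1) y +
        (m + 1) * (y + r) * Q n m (y + 1) * phi_succ' n y -
        (m + 1) * (y + r) * Q m n (y + 1) * phi_succ' m y +
        (m + 1) * (y + r) * ((y + 1) * (y + 2 * r)) * ih m (y + 1)

theorem stmt10 (u d : ℕ) :
    Q u d (MvPolynomial.X 0) * phi u (MvPolynomial.X 0) =
      Q d u (MvPolynomial.X 0) * phi d (MvPolynomial.X 0) :=
  Q_mul_phi_comm u d _
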